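/- (Values in an end component are bounded by the best Maximizer exit.) Fix a finite stochastic game with partition (F, Z, S?) and value V = lfp B. Let Y ⊆ S? be an end component that has at least one Maximizer exit, i.e., the set E = {(s,a) : s ∈ Y ∩ S_Box, a ∈ Av(s), Post(s,a) ⊄ Y} is nonempty. Then for every s ∈ Y: V(s) ≤ max_{(s',a') ∈ E} ∑_{t} δ(s',a',t)·V(t). -/

import Mathlib

/-- A finite (turn-based simple) stochastic game with a partition of the state
space into Maximizer states `SBox` (the rest being Minimizer states), target
states `F`, sink states `Z`, and the remaining unknown states `S \ (F ∪ Z)`. -/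
structure SG (S A : Type) [Fintype S] [DecidableEq S] where
  /-- Maximizer states; all other states belong to Minimizer. -/
  SBox : Finset S
  /-- Target states. -/
  F : Finset S
  /-- Sink states. -/
  Z : Finset S
  hFZ : Disjoint F Z
  /-- Available actions (a nonempty finite set in each state). -/
  Av : S → Finset A
  Av_ne : ∀ s, (Av s).Nonempty
  /-- Transition probabilities. -/
  δ : S → A → S → ℝ
  δ_nonneg : ∀ s a s', 0 ≤ δ s a s'
  δ_sum : ∀ s, ∀ a ∈ Av s, ∑ s', δ s a s' = 1

namespace SG

variable {S A : Type} [Fintype S] [DecidableEq S]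

/-- The unknown states `S? = S \ (F ∪ Z)`. -/
def SUnk (G : SG S A) : Finset S := Finset.univ \ (G.F ∪ G.Z)

/-- The Bellman operator: `1` on targets, `0` on sinks, max over available actions
in Maximizer states and min over available actions in Minimizer states. -/
noncomputable def bellman (G : SG S A) (g : S → ℝ) : S → ℝ := fun s =>
  if s ∈ G.F then 1
  else if s ∈ G.Z then 0
  else if s ∈ G.SBox then (G.Av s).sup' (G.Av_ne s) fun a => ∑ s', G.δ s a s' * g s'
  else (G.Av s).inf' (G.Av_ne s) fun a => ∑ s', G.δ s a s' * g s'

/-- `V` is the value of the game: the least fixed point of the Bellman operator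
among functions `S → [0,1]`. -/
def IsValue (G : SG S A) (V : S → ℝ) : Prop :=
  (∀ s, V s ∈ Set.Icc (0 : ℝ) 1) ∧ G.bellman V = V ∧
    ∀ g : S → ℝ, (∀ s, g s ∈ Set.Icc (0 : ℝ) 1) → G.bellman g = g → ∀ s, V s ≤ g s

/-- `T` is an end component: there is a nonempty set of actions `B'` available in `T`
that stays inside `T`, and using which every state of `T` can reach every other. -/
def IsEC (G : SG S A) (T : Set S) : Prop :=
  T.Nonempty ∧ ∃ B' : Set A, B'.Nonempty ∧ (B' ⊆ ⋃ s ∈ T, (G.Av s : Set A)) ∧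
    (∀ s ∈ T, ∀ a ∈ B', a ∈ G.Av s → ∀ s', 0 < G.δ s a s' → s' ∈ T) ∧
    (∀ s ∈ T, ∀ s' ∈ T, Relation.ReflTransGen
      (fun x y => x ∈ T ∧ ∃ a ∈ B', a ∈ G.Av x ∧ 0 < G.δ x a y) s s')

end SG

/-!
Let `m` be the value of the best Maximizer exit and cap `V` at `m` on `Y`, getting `g ≤ V`.
Then `B g ≤ m` on `Y`: a Minimizer state of the end component can play an action that stays in
`Y`, a Maximizer action that stays in `Y` only averages values `≤ m`, and a Maximizer exit is
worth at most its value under `V`, i.e. at most `m`. So `B g ≤ g`, and the Kleene iterates of `B`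
from `0` stay below `g` while converging to a fixed point; hence the least fixed point `V` is
below `g`, i.e. `V ≤ m` on `Y`.
-/

open Finset Filter Topology

namespace SG

variable {S A : Type} [Fintype S] [DecidableEq S] (G : SG S A)

theorem mem_SUnk {s : S} : s ∈ G.SUnk ↔ s ∉ G.F ∧ s ∉ G.Z := by
  simp [SUnk, not_or]

theorem bellman_apply_of_mem_SBox {s : S} (hs : s ∈ G.SUnk) (hB : s ∈ G.SBox) (g : S → ℝ) :
    G.bellman g s = (G.Av s).sup' (G.Av_ne s) fun a => ∑ t, G.δ s a t * g t := by
  obtain ⟨hF, hZ⟩ := (G.mem_SUnk).1 hs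
  simp [bellman, hF, hZ, hB]

theorem bellman_apply_of_notMem_SBox {s : S} (hs : s ∈ G.SUnk) (hB : s ∉ G.SBox) (g : S → ℝ) :
    G.bellman g s = (G.Av s).inf' (G.Av_ne s) fun a => ∑ t, G.δ s a t * g t := by
  obtain ⟨hF, hZ⟩ := (G.mem_SUnk).1 hs
  simp [bellman, hF, hZ, hB]

theorem sum_δ_mul_le {s : S} {a : A} (ha : a ∈ G.Av s) {g : S → ℝ} {m : ℝ}
    (hg : ∀ t, 0 < G.δ s a t → g t ≤ m) : ∑ t, G.δ s a t * g t ≤ m :=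
  calc ∑ t, G.δ s a t * g t ≤ ∑ t, G.δ s a t * m := by
        refine sum_le_sum fun t _ => ?_
        rcases (G.δ_nonneg s a t).eq_or_lt with h0 | hpos
        · simp [← h0]
        · exact mul_le_mul_of_nonneg_left (hg t hpos) hpos.le
    _ = m := by rw [← sum_mul, G.δ_sum s a ha, one_mul]

theorem sum_δ_mul_mono (s : S) (a : A) : Monotone fun g : S → ℝ => ∑ t, G.δ s a t * g t :=
  fun _ _ hgh => sum_le_sum fun t _ => mul_le_mul_of_nonneg_left (hgh t) (G.δ_nonneg s a t)

theorem bellman_mono : Monotone G.bellman := by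
  intro g h hgh s
  have hsum : ∀ a, ∑ t, G.δ s a t * g t ≤ ∑ t, G.δ s a t * h t := fun a =>
    G.sum_δ_mul_mono s a hgh
  unfold bellman
  split_ifs
  · exact le_rfl
  · exact le_rfl
  · exact sup'_mono_fun fun a _ => hsum a
  · exact le_inf' _ _ fun a ha => (inf'_le _ ha).trans (hsum a)

theorem bellman_mem_Icc {g : S → ℝ} (hg : ∀ s, g s ∈ Set.Icc (0 : ℝ) 1) (s : S) :
    G.bellman g s ∈ Set.Icc (0 : ℝ) 1 := by
  have hact : ∀ a ∈ G.Av s, ∑ t, G.δ s a t * g t ∈ Set.Icc (0 : ℝ) 1 := fun a ha =>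
    ⟨sum_nonneg fun t _ => mul_nonneg (G.δ_nonneg s a t) (hg t).1,
      G.sum_δ_mul_le ha fun t _ => (hg t).2⟩
  obtain ⟨a, ha⟩ := G.Av_ne s
  unfold bellman
  split_ifs
  · exact ⟨zero_le_one, le_rfl⟩
  · exact ⟨le_rfl, zero_le_one⟩
  · exact ⟨(hact a ha).1.trans (le_sup' (fun b => ∑ t, G.δ s b t * g t) ha),
      sup'_le _ _ fun b hb => (hact b hb).2⟩
  · exact ⟨le_inf' _ _ fun b hb => (hact b hb).1, (inf'_le _ ha).trans (hact a ha).2⟩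

theorem continuous_bellman : Continuous G.bellman := by
  refine continuous_pi fun s => ?_
  have hsum : ∀ a, Continuous fun g : S → ℝ => ∑ t, G.δ s a t * g t := fun a => by fun_prop
  unfold bellman
  split_ifs
  · exact continuous_const
  · exact continuous_const
  · exact Continuous.finset_sup'_apply (G.Av_ne s) fun a _ => hsum a
  · exact Continuous.finset_inf'_apply (G.Av_ne s) fun a _ => hsum a

variable {G}

theorem IsValue.le_of_bellman_le {V g : S → ℝ} (hV : G.IsValue V)
    (hg : ∀ s, g s ∈ Set.Icc (0 : ℝ) 1) (hBg : G.bellman g ≤ g) : V ≤ g := by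
  set f : ℕ → S → ℝ := fun n => G.bellman^[n] 0
  have hf_succ : ∀ n, f (n + 1) = G.bellman (f n) := fun n =>
    Function.iterate_succ_apply' _ _ _
  have hf_mono : Monotone f := G.bellman_mono.monotone_iterate_of_le_map fun s =>
    (G.bellman_mem_Icc (fun _ => ⟨le_rfl, zero_le_one⟩) s).1
  have hf_le : ∀ n, f n ≤ g := by
    intro n
    induction n with
    | zero => exact fun s => (hg s).1
    | succ n ih => rw [hf_succ]; exact (G.bellman_mono ih).trans hBg
  have hbdd : BddAbove (Set.range f) := ⟨g, Set.forall_mem_range.2 hf_le⟩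
  set L := ⨆ n, f n
  have hL : Tendsto f atTop (𝓝 L) := tendsto_atTop_ciSup hf_mono hbdd
  have hL_fix : G.bellman L = L := by
    refine tendsto_nhds_unique ((G.continuous_bellman.tendsto L).comp hL) ?_
    simpa only [Function.comp_def, hf_succ] using hL.comp (tendsto_add_atTop_nat 1)
  have hL_le : L ≤ g := ciSup_le hf_le
  have hL_Icc : ∀ s, L s ∈ Set.Icc (0 : ℝ) 1 := fun s =>
    ⟨le_ciSup hbdd 0 s, (hL_le s).trans (hg s).2⟩
  exact fun s => (hV.2.2 L hL_Icc hL_fix s).trans (hL_le s)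

theorem IsValue.le_of_forall_bellman_le {V : S → ℝ} (hV : G.IsValue V) {T : Finset S} {m : ℝ}
    (hm : 0 ≤ m) (hT : ∀ g ≤ V, (∀ t ∈ T, g t ≤ m) → ∀ t ∈ T, G.bellman g t ≤ m) :
    ∀ s ∈ T, V s ≤ m := by
  set g : S → ℝ := T.piecewise (fun t => min (V t) m) V
  have hgV : g ≤ V := fun t => by
    by_cases ht : t ∈ T <;> simp [g, ht]
  have hg_m : ∀ t ∈ T, g t ≤ m := fun t ht => by simp [g, ht]
  have hg_Icc : ∀ t, g t ∈ Set.Icc (0 : ℝ) 1 := fun t => by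
    by_cases ht : t ∈ T <;> simp [g, ht, (hV.1 t).1, (hV.1 t).2, hm]
  have hBg : G.bellman g ≤ g := fun t => by
    have hBV : G.bellman g t ≤ V t := hV.2.1 ▸ G.bellman_mono hgV t
    show G.bellman g t ≤ T.piecewise (fun t => min (V t) m) V t
    by_cases ht : t ∈ T
    · rw [T.piecewise_eq_of_mem _ _ ht]
      exact le_min hBV (hT g hgV hg_m t ht)
    · rwa [T.piecewise_eq_of_notMem _ _ ht]
  exact fun s hs => (hV.le_of_bellman_le hg_Icc hBg s).trans (hg_m s hs)

theorem IsEC.exists_forall_pos_mem {T : Set S} (hT : G.IsEC T) {s : S} (hs : s ∈ T) :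
    ∃ a ∈ G.Av s, ∀ t, 0 < G.δ s a t → t ∈ T := by
  obtain ⟨-, B', ⟨b, hb⟩, hB'_sub, hB'_stay, hB'_reach⟩ := hT
  obtain ⟨x, hx, hbx⟩ := Set.mem_iUnion₂.1 (hB'_sub hb)
  rcases (hB'_reach s hs x hx).cases_head with rfl | ⟨_, ⟨-, a, haB, ha, -⟩, -⟩
  · exact ⟨b, hbx, hB'_stay s hx b hb hbx⟩
  · exact ⟨a, ha, hB'_stay s hs a haB ha⟩

theorem IsEC.bellman_le {T : Set S} (hT : G.IsEC T) (hT_sub : T ⊆ G.SUnk) {g : S → ℝ} {m : ℝ}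
    (hg : ∀ t ∈ T, g t ≤ m)
    (hexit : ∀ s ∈ T, s ∈ G.SBox → ∀ a ∈ G.Av s, (∃ t, 0 < G.δ s a t ∧ t ∉ T) →
      ∑ t, G.δ s a t * g t ≤ m) :
    ∀ s ∈ T, G.bellman g s ≤ m := by
  intro s hs
  by_cases hB : s ∈ G.SBox
  · rw [G.bellman_apply_of_mem_SBox (hT_sub hs) hB]
    refine sup'_le _ _ fun a ha => ?_
    by_cases hleave : ∃ t, 0 < G.δ s a t ∧ t ∉ T
    · exact hexit s hs hB a ha hleave
    · push Not at hleave
      exact G.sum_δ_mul_le ha fun t ht => hg t (hleave t ht)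
  · rw [G.bellman_apply_of_notMem_SBox (hT_sub hs) hB]
    obtain ⟨a, ha, hstay⟩ := hT.exists_forall_pos_mem hs
    exact (inf'_le _ ha).trans (G.sum_δ_mul_le ha fun t ht => hg t (hstay t ht))

end SG

open scoped Classical in
/-- Values in an end component are bounded by the best Maximizer exit: if `Y ⊆ S?`
is an end component whose set `E` of Maximizer exiting state-action pairs is
nonempty, then for every `s ∈ Y`, `V(s) ≤ max_{(s',a') ∈ E} ∑_t δ(s',a',t)·V(t)`. -/
theorem svi_ec_bounded_by_best_exit {S A : Type} [Fintype S] [Fintype A]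
    [DecidableEq S] (G : SG S A) (V : S → ℝ) (hV : G.IsValue V)
    (Y : Finset S) (hYsub : (↑Y : Set S) ⊆ (↑G.SUnk : Set S)) (hEC : G.IsEC ↑Y)
    (E : Finset (S × A))
    (hE : E = Finset.univ.filter fun p : S × A =>
      p.1 ∈ Y ∧ p.1 ∈ G.SBox ∧ p.2 ∈ G.Av p.1 ∧ ∃ t, 0 < G.δ p.1 p.2 t ∧ t ∉ Y)
    (hEne : E.Nonempty) :
    ∀ s ∈ Y, V s ≤ E.sup' hEne fun p => ∑ t, G.δ p.1 p.2 t * V t := by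
  set m := E.sup' hEne fun p => ∑ t, G.δ p.1 p.2 t * V t
  have hm : 0 ≤ m := by
    obtain ⟨p, hp⟩ := hEne
    exact (sum_nonneg fun t _ => mul_nonneg (G.δ_nonneg _ _ t) (hV.1 t).1).trans
      (le_sup' (fun p : S × A => ∑ t, G.δ p.1 p.2 t * V t) hp)
  refine hV.le_of_forall_bellman_le hm fun g hgV hg_m => hEC.bellman_le hYsub hg_m ?_
  intro s hs hB a ha hleave
  have hexit : (s, a) ∈ E := hE ▸ mem_filter.2 ⟨mem_univ _, hs, hB, ha, hleave⟩
  calc ∑ t, G.δ s a t * g t ≤ ∑ t, G.δ s a t * V t := G.sum_δ_mul_mono s a hgV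
    _ ≤ m := le_sup' (fun p : S × A => ∑ t, G.δ p.1 p.2 t * V t) hexit
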